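/- (Intermediate regularity lemma) For every ε > 0, every integer m₀ ≥ 1, every k ≥ 1, and every k-colored directed graphon W = (W^{(α,β)})_{α,β∈[k]}, there exists a measurable partition P of [0,1] into at most (16 m₀)^{2^{k⁴/ε²}} / 4 parts such that for every measurable partition Q of [0,1] into at most max{|P|, m₀} classes, Σ_{α,β=1}^k ‖W^{(α,β)} − (W^{(α,β)})_P‖_{□Q} ≤ ε. -/

import Mathlib

open MeasureTheory Set

noncomputable section

abbrev I01 : Set ℝ := Set.Icc 0 1

def IsKernel (W : ℝ → ℝ → ℝ) : Prop :=
  Measurable (Function.uncurry W) ∧ ∃ C, ∀ x y, |W x y| ≤ C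

def IsPartition {ι : Type*} [Fintype ι] (P : ι → Set ℝ) : Prop :=
  (∀ i, MeasurableSet (P i)) ∧ (∀ i, P i ⊆ I01) ∧
  (Pairwise fun i j => Disjoint (P i) (P j)) ∧ (⋃ i, P i) = I01

def cutNorm (W : ℝ → ℝ → ℝ) : ℝ :=
  sSup { r | ∃ S T : Set ℝ, MeasurableSet S ∧ MeasurableSet T ∧ S ⊆ I01 ∧ T ⊆ I01 ∧
    r = |∫ x in S, ∫ y in T, W x y| }

def cutPNorm {ι : Type*} [Fintype ι] (P : ι → Set ℝ) (W : ℝ → ℝ → ℝ) : ℝ :=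
  sSup { r | ∃ S T : ι → Set ℝ,
    (∀ i, MeasurableSet (S i) ∧ MeasurableSet (T i) ∧ S i ⊆ P i ∧ T i ⊆ P i) ∧
    r = ∑ i, ∑ j, |∫ x in S i, ∫ y in T j, W x y| }

def l1Norm (W : ℝ → ℝ → ℝ) : ℝ := ∫ x in I01, ∫ y in I01, |W x y|

def l2sq (W : ℝ → ℝ → ℝ) : ℝ := ∫ x in I01, ∫ y in I01, (W x y)^2

def avgP {ι : Type*} [Fintype ι] (P : ι → Set ℝ) (W : ℝ → ℝ → ℝ) : ℝ → ℝ → ℝ :=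
  fun x y => ∑ i, ∑ j, (P i).indicator (fun _ => (1:ℝ)) x * (P j).indicator (fun _ => (1:ℝ)) y *
    ((∫ u in P i, ∫ v in P j, W u v) / (volume (P i)).toReal / (volume (P j)).toReal)

def IsColoredDigraphon (k : ℕ) (W : Fin k → Fin k → ℝ → ℝ → ℝ) : Prop :=
  (∀ α β, Measurable (Function.uncurry (W α β))) ∧
  (∀ α β x y, W α β x y ∈ Set.Icc (0:ℝ) 1) ∧
  (∀ α β x y, W α β x y = W β α y x) ∧
  (∀ x y, ∑ α, ∑ β, W α β x y = 1)

/-!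
Energy increment. The energy of a partition `P` is `∑_{α,β} ‖(W^{αβ})_P‖₂² ∈ [0, 1]`. If
`Q`, `S_i, T_i ⊆ Q_i` witness `∑_{i,j} |∫_{S_i × T_j} (U - U_P)| = c` for a colour `U = W^{αβ}`,
let `R` be the common refinement of `P`, `Q`, `⋃ S_i` and `⋃ T_j`. Each `S_i × T_j` is a union
of products of cells of `R`, where `U` may be replaced by `U_R`; by Cauchy–Schwarz and Pythagoras
(`R` refines `P`), `c² ≤ ‖U_R - U_P‖₂² = ‖U_R‖₂² - ‖U_P‖₂²`, so the energy grows by `c²`.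
With `M₀ = 1`, `M_{n+1} = 4 m₀ M_n²` and `e_n` the largest energy of a partition into at most
`M_n` parts, some `n ≤ k⁴/ε²` has `e_{n+1} < e_n + ε²/k⁴`. A partition into at most `M_n` parts
with energy close enough to `e_n` then leaves every cut-`Q`-norm at most `ε/k²`.
-/

lemma volume_ne_top_of_subset_I01 {A : Set ℝ} (hA : A ⊆ I01) : volume A ≠ ⊤ :=
  ((measure_mono hA).trans_lt (by simp [I01])).ne

section Kernel

variable {U V : ℝ → ℝ → ℝ} {A B : Set ℝ}

lemma IsKernel.integrableOn (hU : IsKernel U) (hB : volume B ≠ ⊤) (x : ℝ) :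
    IntegrableOn (U x) B := by
  obtain ⟨C, hC⟩ := hU.2
  exact Measure.integrableOn_of_bounded hB (hU.1.comp measurable_prodMk_left).aestronglyMeasurable
    (M := C) (ae_of_all _ fun y => (Real.norm_eq_abs _).trans_le (hC x y))

lemma IsKernel.integrableOn_integral (hU : IsKernel U) (hA : volume A ≠ ⊤)
    (hB : volume B ≠ ⊤) : IntegrableOn (fun x => ∫ y in B, U x y) A := by
  obtain ⟨C, hC⟩ := hU.2
  refine Measure.integrableOn_of_bounded hA
    (hU.1.stronglyMeasurable.integral_prod_right (ν := volume.restrict B)).aestronglyMeasurable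
    (M := C * volume.real B) (ae_of_all _ fun x => ?_)
  exact norm_setIntegral_le_of_norm_le_const hB.lt_top fun y _ =>
    (Real.norm_eq_abs _).trans_le (hC x y)

lemma IsKernel.integral_integral_sub (hU : IsKernel U) (hV : IsKernel V) (hA : volume A ≠ ⊤)
    (hB : volume B ≠ ⊤) :
    ∫ x in A, ∫ y in B, (U x y - V x y) =
      (∫ x in A, ∫ y in B, U x y) - ∫ x in A, ∫ y in B, V x y := by
  rw [← integral_sub (hU.integrableOn_integral hA hB) (hV.integrableOn_integral hA hB)]
  congr 1 with x
  exact integral_sub (hU.integrableOn hB x) (hV.integrableOn hB x)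

lemma integral_integral_finsetSum {σ : Type*} {U : σ → ℝ → ℝ → ℝ} (s : Finset σ)
    (hU : ∀ a ∈ s, IsKernel (U a)) (hA : volume A ≠ ⊤) (hB : volume B ≠ ⊤) :
    ∫ x in A, ∫ y in B, ∑ a ∈ s, U a x y = ∑ a ∈ s, ∫ x in A, ∫ y in B, U a x y := by
  rw [← integral_finsetSum s fun a ha => (hU a ha).integrableOn_integral hA hB]
  congr 1 with x
  exact integral_finsetSum s fun a ha => (hU a ha).integrableOn hB x

/-- Also true when `A` or `B` is null, where the average on the right is the junk value `0`. -/
lemma integral_integral_eq_mul_div (hA : volume A ≠ ⊤) (hB : volume B ≠ ⊤) (U : ℝ → ℝ → ℝ) :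
    ∫ x in A, ∫ y in B, U x y = volume.real A * volume.real B *
      ((∫ x in A, ∫ y in B, U x y) / volume.real A / volume.real B) := by
  by_cases hA0 : volume.real A = 0
  · rw [Measure.restrict_eq_zero.2 ((measureReal_eq_zero_iff hA).1 hA0)]
    simp
  by_cases hB0 : volume.real B = 0
  · simp [Measure.restrict_eq_zero.2 ((measureReal_eq_zero_iff hB).1 hB0)]
  field_simp

end Kernel

section Partition

variable {ι κ : Type*} [Fintype ι] [Fintype κ] {P : ι → Set ℝ} {R : κ → Set ℝ} {x : ℝ}

lemma IsPartition.volume_ne_top (hP : IsPartition P) (i : ι) : volume (P i) ≠ ⊤ :=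
  volume_ne_top_of_subset_I01 (hP.2.1 i)

lemma IsPartition.eq_of_mem (hP : IsPartition P) {i j : ι} (hi : x ∈ P i) (hj : x ∈ P j) :
    i = j :=
  by_contra fun h => (hP.2.2.1 h).ne_of_mem hi hj rfl

lemma IsPartition.exists_mem (hP : IsPartition P) (hx : x ∈ I01) : ∃ i, x ∈ P i :=
  mem_iUnion.1 (hP.2.2.2 ▸ hx)

lemma IsPartition.nonempty (hP : IsPartition P) : Nonempty ι :=
  let ⟨i, _⟩ := hP.exists_mem (x := 0) ⟨le_rfl, zero_le_one⟩; ⟨i⟩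

lemma IsPartition.sum_volume_real (hP : IsPartition P) : ∑ i, volume.real (P i) = 1 := by
  have h := measureReal_iUnion_fintype (μ := volume) hP.2.2.1 hP.1 hP.volume_ne_top
  rw [hP.2.2.2] at h
  simpa using h.symm

lemma IsPartition.comp_equiv (hP : IsPartition P) (e : κ ≃ ι) : IsPartition (P ∘ e) := by
  refine ⟨fun i => hP.1 (e i), fun i => hP.2.1 (e i),
    fun i j hij => hP.2.2.1 (e.injective.ne hij), ?_⟩
  rw [← hP.2.2.2]
  exact e.iSup_comp (g := P)

lemma IsPartition.eq_biUnion (hR : IsPartition R) {A : Set ℝ} (hA : A ⊆ I01) (s : Finset κ)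
    (hsub : ∀ z ∈ s, R z ⊆ A) (hdisj : ∀ z ∉ s, Disjoint (R z) A) : A = ⋃ z ∈ s, R z := by
  refine (iUnion₂_subset hsub).antisymm' fun x hx => ?_
  obtain ⟨z, hz⟩ := hR.exists_mem (hA hx)
  by_cases hzs : z ∈ s
  · exact mem_biUnion hzs hz
  · exact absurd hx ((hdisj z hzs).notMem_of_mem_left hz)

def partInf (P : ι → Set ℝ) (R : κ → Set ℝ) : ι × κ → Set ℝ := fun p => P p.1 ∩ R p.2

lemma IsPartition.inf (hP : IsPartition P) (hR : IsPartition R) : IsPartition (partInf P R) := by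
  refine ⟨fun p => (hP.1 p.1).inter (hR.1 p.2), fun p => inter_subset_left.trans (hP.2.1 p.1),
    fun p q hpq => ?_, ?_⟩
  · rcases Prod.ext_iff.not.1 hpq |> not_and_or.1 with h | h
    · exact (hP.2.2.1 h).mono inter_subset_left inter_subset_left
    · exact (hR.2.2.1 h).mono inter_subset_right inter_subset_right
  · refine (iUnion_subset fun p : ι × κ => inter_subset_left.trans (hP.2.1 p.1)).antisymm
      fun x hx => ?_
    obtain ⟨i, hi⟩ := hP.exists_mem hx
    obtain ⟨j, hj⟩ := hR.exists_mem hx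
    exact mem_iUnion.2 ⟨(i, j), hi, hj⟩

lemma IsPartition.eq_biUnion_inf (hP : IsPartition P) (hR : IsPartition R) (i : ι) :
    P i = ⋃ c ∈ (Finset.univ : Finset κ), partInf P R (i, c) := by
  simp only [partInf, Finset.mem_univ, iUnion_true, ← inter_iUnion, hR.2.2.2,
    inter_eq_left.2 (hP.2.1 i)]

def bipartition (A : Set ℝ) : Bool → Set ℝ := fun b => cond b A (I01 \ A)

lemma isPartition_bipartition {A : Set ℝ} (hA : MeasurableSet A) (hA1 : A ⊆ I01) :
    IsPartition (bipartition A) := by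
  refine ⟨fun b => ?_, fun b => ?_, fun b c hbc => ?_, ?_⟩
  · cases b
    exacts [measurableSet_Icc.diff hA, hA]
  · cases b
    exacts [sdiff_subset, hA1]
  · cases b <;> cases c <;> simp_all [bipartition, disjoint_sdiff_left, disjoint_sdiff_right]
  · exact (union_eq_iUnion.symm).trans (union_sdiff_cancel hA1)

end Partition

section BlockAverage

variable {ι σ τ : Type*} {P : ι → Set ℝ} {U : ℝ → ℝ → ℝ} {x y : ℝ}

def blockAvg (U : ℝ → ℝ → ℝ) (P : ι → Set ℝ) (i j : ι) : ℝ :=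
  (∫ x in P i, ∫ y in P j, U x y) / volume.real (P i) / volume.real (P j)

lemma blockAvg_nonneg (hU : ∀ x y, 0 ≤ U x y) (P : ι → Set ℝ) (i j : ι) :
    0 ≤ blockAvg U P i j :=
  div_nonneg (div_nonneg (integral_nonneg fun x => integral_nonneg fun y => hU x y)
    measureReal_nonneg) measureReal_nonneg

variable [Fintype ι]

lemma IsPartition.integral_integral_eq (hP : IsPartition P) (U : ℝ → ℝ → ℝ) (i j : ι) :
    ∫ x in P i, ∫ y in P j, U x y =
      volume.real (P i) * volume.real (P j) * blockAvg U P i j :=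
  integral_integral_eq_mul_div (hP.volume_ne_top i) (hP.volume_ne_top j) U

lemma avgP_apply_of_mem (hP : IsPartition P) {i j : ι} (hx : x ∈ P i) (hy : y ∈ P j) :
    avgP P U x y = blockAvg U P i j := by
  have hrow : ∀ i' ≠ i, (P i').indicator (fun _ => (1:ℝ)) x = 0 := fun i' h =>
    indicator_of_notMem (fun h' => h (hP.eq_of_mem h' hx)) _
  have hcol : ∀ j' ≠ j, (P j').indicator (fun _ => (1:ℝ)) y = 0 := fun j' h =>
    indicator_of_notMem (fun h' => h (hP.eq_of_mem h' hy)) _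
  rw [avgP, Finset.sum_eq_single i (fun i' _ h => by simp [hrow i' h]) (by simp),
    Finset.sum_eq_single j (fun j' _ h => by simp [hcol j' h]) (by simp)]
  simp [hx, hy, blockAvg, Measure.real]

lemma isKernel_avgP (hP : ∀ i, MeasurableSet (P i)) (U : ℝ → ℝ → ℝ) : IsKernel (avgP P U) := by
  refine ⟨?_, ∑ i, ∑ j, |blockAvg U P i j|, fun x y => ?_⟩
  · exact Finset.measurable_sum _ fun i _ => Finset.measurable_sum _ fun j _ =>
      (((measurable_const.indicator (hP i)).comp measurable_fst).mul
        ((measurable_const.indicator (hP j)).comp measurable_snd)).mul measurable_const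
  · have hind (A : Set ℝ) (z : ℝ) : |A.indicator (fun _ => (1:ℝ)) z| ≤ 1 := by
      simpa using norm_indicator_le_norm_self (s := A) (fun _ => (1:ℝ)) z
    refine (Finset.abs_sum_le_sum_abs _ _).trans (Finset.sum_le_sum fun i _ =>
      (Finset.abs_sum_le_sum_abs _ _).trans (Finset.sum_le_sum fun j _ => ?_))
    rw [abs_mul, abs_mul]
    exact mul_le_of_le_one_left (abs_nonneg _) (mul_le_one₀ (hind _ x) (abs_nonneg _) (hind _ y))

lemma integral_integral_avgP_of_subset (hP : IsPartition P) {A B : Set ℝ} (hA : MeasurableSet A)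
    (hB : MeasurableSet B) {i j : ι} (hAi : A ⊆ P i) (hBj : B ⊆ P j) :
    ∫ x in A, ∫ y in B, avgP P U x y = volume.real A * volume.real B * blockAvg U P i j := by
  rw [setIntegral_congr_fun hA fun x hx => setIntegral_congr_fun hB fun y hy =>
    avgP_apply_of_mem (U := U) hP (hAi hx) (hBj hy)]
  simp [mul_assoc]

lemma IsKernel.integral_integral_biUnion (hU : IsKernel U) {A : σ → Set ℝ} {B : τ → Set ℝ}
    (hAm : ∀ a, MeasurableSet (A a)) (hAd : Pairwise fun a a' => Disjoint (A a) (A a'))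
    (hAv : ∀ a, volume (A a) ≠ ⊤) (hBm : ∀ b, MeasurableSet (B b))
    (hBd : Pairwise fun b b' => Disjoint (B b) (B b')) (hBv : ∀ b, volume (B b) ≠ ⊤)
    (s : Finset σ) (t : Finset τ) :
    ∫ x in ⋃ a ∈ s, A a, ∫ y in ⋃ b ∈ t, B b, U x y =
      ∑ a ∈ s, ∑ b ∈ t, ∫ x in A a, ∫ y in B b, U x y := by
  have hBt : volume (⋃ b ∈ t, B b) ≠ ⊤ :=
    (measure_biUnion_finset_le t B).trans_lt (ENNReal.sum_lt_top.2 fun b _ => (hBv b).lt_top) |>.ne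
  rw [integral_biUnion_finset s (fun a _ => hAm a) (hAd.set_pairwise _)
    fun a _ => hU.integrableOn_integral (hAv a) hBt]
  refine Finset.sum_congr rfl fun a _ => ?_
  rw [← integral_finsetSum t fun b _ => hU.integrableOn_integral (hAv a) (hBv b)]
  congr 1 with x
  exact integral_biUnion_finset t (fun b _ => hBm b) (hBd.set_pairwise _)
    fun b _ => hU.integrableOn (hBv b) x

end BlockAverage

section Refinement

variable {ι κ σ τ : Type*} [Fintype ι] [Fintype κ] {P : ι → Set ℝ} {R : κ → Set ℝ}
  {U : ℝ → ℝ → ℝ}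

lemma IsKernel.integral_integral_sub_avgP_biUnion (hU : IsKernel U) (hP : IsPartition P)
    (hR : IsPartition R) (s s' : Finset (ι × κ)) :
    ∫ x in ⋃ z ∈ s, partInf P R z, ∫ y in ⋃ z' ∈ s', partInf P R z', (U x y - avgP P U x y) =
      ∑ z ∈ s, ∑ z' ∈ s', volume.real (partInf P R z) * volume.real (partInf P R z') *
        (blockAvg U (partInf P R) z z' - blockAvg U P z.1 z'.1) := by
  have hPR := hP.inf hR
  have hfin : ∀ t : Finset (ι × κ), volume (⋃ z ∈ t, partInf P R z) ≠ ⊤ := fun t =>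
    volume_ne_top_of_subset_I01 (iUnion₂_subset fun z _ => hPR.2.1 z)
  have hbiUnion {V : ℝ → ℝ → ℝ} (hV : IsKernel V) := hV.integral_integral_biUnion hPR.1 hPR.2.2.1
    hPR.volume_ne_top hPR.1 hPR.2.2.1 hPR.volume_ne_top s s'
  rw [hU.integral_integral_sub (isKernel_avgP hP.1 U) (hfin s) (hfin s'), hbiUnion hU,
    hbiUnion (isKernel_avgP hP.1 U), ← Finset.sum_sub_distrib]
  refine Finset.sum_congr rfl fun z _ => ?_
  rw [← Finset.sum_sub_distrib]
  refine Finset.sum_congr rfl fun z' _ => ?_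
  rw [integral_integral_avgP_of_subset hP (hPR.1 z) (hPR.1 z') inter_subset_left
    inter_subset_left, hPR.integral_integral_eq, mul_sub]

lemma sum_sum_le_sum_of_pairwise_disjoint [Fintype σ] {f : κ → ℝ} (hf : ∀ z, 0 ≤ f z)
    {s : σ → Finset κ} (hs : Pairwise fun i j => Disjoint (s i) (s j)) :
    ∑ i, ∑ z ∈ s i, f z ≤ ∑ z, f z := by
  classical
  rw [← Finset.sum_biUnion (hs.set_pairwise _)]
  exact Finset.sum_le_sum_of_subset_of_nonneg (Finset.subset_univ _) fun z _ _ => hf z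

lemma IsKernel.sum_abs_integral_integral_sub_avgP_le (hU : IsKernel U) (hP : IsPartition P)
    (hR : IsPartition R) [Fintype σ] [Fintype τ] {s : σ → Finset (ι × κ)}
    {s' : τ → Finset (ι × κ)} (hs : Pairwise fun i j => Disjoint (s i) (s j))
    (hs' : Pairwise fun i j => Disjoint (s' i) (s' j)) :
    ∑ i, ∑ j, |∫ x in ⋃ z ∈ s i, partInf P R z, ∫ y in ⋃ z' ∈ s' j, partInf P R z',
        (U x y - avgP P U x y)| ≤
      ∑ z, ∑ z', volume.real (partInf P R z) * volume.real (partInf P R z') *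
        |blockAvg U (partInf P R) z z' - blockAvg U P z.1 z'.1| := by
  set F : ι × κ → ι × κ → ℝ := fun z z' => volume.real (partInf P R z) *
    volume.real (partInf P R z') * |blockAvg U (partInf P R) z z' - blockAvg U P z.1 z'.1|
  have hF : ∀ z z', 0 ≤ F z z' := fun z z' =>
    mul_nonneg (mul_nonneg measureReal_nonneg measureReal_nonneg) (abs_nonneg _)
  calc _ ≤ ∑ i, ∑ j, ∑ z ∈ s i, ∑ z' ∈ s' j, F z z' := by
        gcongr with i _ j _
        rw [hU.integral_integral_sub_avgP_biUnion hP hR]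
        refine (Finset.abs_sum_le_sum_abs _ _).trans (Finset.sum_le_sum fun z _ =>
          (Finset.abs_sum_le_sum_abs _ _).trans_eq (Finset.sum_congr rfl fun z' _ => ?_))
        rw [abs_mul, abs_of_nonneg (mul_nonneg measureReal_nonneg measureReal_nonneg)]
    _ = ∑ i, ∑ z ∈ s i, ∑ j, ∑ z' ∈ s' j, F z z' :=
        Finset.sum_congr rfl fun i _ => Finset.sum_comm
    _ ≤ ∑ i, ∑ z ∈ s i, ∑ z', F z z' := by
        gcongr with i _ z _
        exact sum_sum_le_sum_of_pairwise_disjoint (hF z) hs'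
    _ ≤ ∑ z, ∑ z', F z z' :=
        sum_sum_le_sum_of_pairwise_disjoint (fun z => Finset.sum_nonneg fun z' _ => hF z z') hs

lemma IsPartition.sq_sum_sum_mul_abs_le (hR : IsPartition R) (f : κ → κ → ℝ) :
    (∑ z, ∑ z', volume.real (R z) * volume.real (R z') * |f z z'|) ^ 2 ≤
      ∑ z, ∑ z', volume.real (R z) * volume.real (R z') * f z z' ^ 2 := by
  set w : κ × κ → ℝ := fun p => volume.real (R p.1) * volume.real (R p.2)
  have hw0 : ∀ p, 0 ≤ w p := fun p => mul_nonneg measureReal_nonneg measureReal_nonneg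
  have hw : ∑ p, w p = 1 := by
    simp only [w, Fintype.sum_prod_type, ← Finset.sum_mul_sum, hR.sum_volume_real, one_mul]
  have key := Finset.sum_sq_le_sum_mul_sum_of_sq_le_mul Finset.univ
    (r := fun p => w p * |f p.1 p.2|) (g := fun p => w p * f p.1 p.2 ^ 2) (fun p _ => hw0 p)
    (fun p _ => mul_nonneg (hw0 p) (sq_nonneg _))
    fun p _ => le_of_eq (by rw [mul_pow, sq_abs]; ring)
  rw [hw, one_mul] at key
  simpa only [w, Fintype.sum_prod_type] using key

end Refinement

section Energy

variable {ι κ : Type*} [Fintype ι] [Fintype κ] {P : ι → Set ℝ} {R : κ → Set ℝ}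
  {U : ℝ → ℝ → ℝ}

/-- `‖U_P‖₂²`, which is `l2sq (avgP P U)` when `P` is a partition. -/
def blockEnergy (U : ℝ → ℝ → ℝ) (P : ι → Set ℝ) : ℝ :=
  ∑ i, ∑ j, volume.real (P i) * volume.real (P j) * blockAvg U P i j ^ 2

lemma IsPartition.volume_real_eq_sum_inf (hP : IsPartition P) (hR : IsPartition R) (i : ι) :
    volume.real (P i) = ∑ c, volume.real (partInf P R (i, c)) := by
  have hPR := hP.inf hR
  conv_lhs => rw [hP.eq_biUnion_inf hR i]
  exact measureReal_biUnion_finset (fun c _ c' _ h => hPR.2.2.1 (by simpa using h))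
    (fun c _ => hPR.1 (i, c)) fun c _ => hPR.volume_ne_top (i, c)

lemma IsKernel.integral_integral_eq_sum_inf (hU : IsKernel U) (hP : IsPartition P)
    (hR : IsPartition R) (i j : ι) :
    ∫ x in P i, ∫ y in P j, U x y =
      ∑ c, ∑ c', ∫ x in partInf P R (i, c), ∫ y in partInf P R (j, c'), U x y := by
  have hPR := hP.inf hR
  have hd (i : ι) : Pairwise fun c c' => Disjoint (partInf P R (i, c)) (partInf P R (i, c')) :=
    fun c c' h => hPR.2.2.1 (by simpa using h)
  have h := hU.integral_integral_biUnion (fun c => hPR.1 (i, c)) (hd i)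
    (fun c => hPR.volume_ne_top (i, c)) (fun c => hPR.1 (j, c)) (hd j)
    (fun c => hPR.volume_ne_top (j, c)) Finset.univ Finset.univ
  rwa [← hP.eq_biUnion_inf hR i, ← hP.eq_biUnion_inf hR j] at h

/-- On the block `P i × P j`, this is Pythagoras for `U_{P ∧ R} - U_P`. -/
lemma IsKernel.sum_sum_sq_blockAvg_inf_sub (hU : IsKernel U) (hP : IsPartition P)
    (hR : IsPartition R) (i j : ι) :
    ∑ c, ∑ c', volume.real (partInf P R (i, c)) * volume.real (partInf P R (j, c')) *
        (blockAvg U (partInf P R) (i, c) (j, c') - blockAvg U P i j) ^ 2 =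
      ∑ c, ∑ c', volume.real (partInf P R (i, c)) * volume.real (partInf P R (j, c')) *
        blockAvg U (partInf P R) (i, c) (j, c') ^ 2 -
      volume.real (P i) * volume.real (P j) * blockAvg U P i j ^ 2 := by
  have hPR := hP.inf hR
  have hmass : volume.real (P i) * volume.real (P j) * blockAvg U P i j =
      ∑ c, ∑ c', volume.real (partInf P R (i, c)) * volume.real (partInf P R (j, c')) *
        blockAvg U (partInf P R) (i, c) (j, c') := by
    simp only [← hP.integral_integral_eq, ← hPR.integral_integral_eq,
      hU.integral_integral_eq_sum_inf hP hR]
  set a := blockAvg U P i j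
  have hexpand : ∀ (m b : ℝ), m * (b - a) ^ 2 = m * b ^ 2 - 2 * a * (m * b) + a ^ 2 * m :=
    fun m b => by ring
  simp only [hexpand, Finset.sum_add_distrib, Finset.sum_sub_distrib, ← Finset.mul_sum, ← hmass]
  rw [← Finset.sum_mul, ← hP.volume_real_eq_sum_inf hR, ← hP.volume_real_eq_sum_inf hR]
  ring

lemma IsKernel.blockEnergy_inf_sub (hU : IsKernel U) (hP : IsPartition P) (hR : IsPartition R) :
    blockEnergy U (partInf P R) - blockEnergy U P =
      ∑ z, ∑ z', volume.real (partInf P R z) * volume.real (partInf P R z') *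
        (blockAvg U (partInf P R) z z' - blockAvg U P z.1 z'.1) ^ 2 := by
  have hswap (F : ι × κ → ι × κ → ℝ) :
      ∑ z, ∑ z', F z z' = ∑ i, ∑ j, ∑ c, ∑ c', F (i, c) (j, c') := by
    simp only [Fintype.sum_prod_type]
    exact Finset.sum_congr rfl fun i _ => Finset.sum_comm
  rw [blockEnergy, blockEnergy, hswap, hswap, ← Finset.sum_sub_distrib]
  simp only [← Finset.sum_sub_distrib, hU.sum_sum_sq_blockAvg_inf_sub hP hR]

lemma IsKernel.blockEnergy_le_inf (hU : IsKernel U) (hP : IsPartition P) (hR : IsPartition R) :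
    blockEnergy U P ≤ blockEnergy U (partInf P R) :=
  sub_nonneg.1 <| (hU.blockEnergy_inf_sub hP hR).symm ▸ Finset.sum_nonneg fun _ _ =>
    Finset.sum_nonneg fun _ _ =>
      mul_nonneg (mul_nonneg measureReal_nonneg measureReal_nonneg) (sq_nonneg _)

lemma IsKernel.sq_sum_abs_integral_integral_sub_avgP_le {σ τ : Type*} [Fintype σ] [Fintype τ]
    (hU : IsKernel U) (hP : IsPartition P) (hR : IsPartition R) {s : σ → Finset (ι × κ)}
    {s' : τ → Finset (ι × κ)} (hs : Pairwise fun i j => Disjoint (s i) (s j))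
    (hs' : Pairwise fun i j => Disjoint (s' i) (s' j)) :
    (∑ i, ∑ j, |∫ x in ⋃ z ∈ s i, partInf P R z, ∫ y in ⋃ z' ∈ s' j, partInf P R z',
        (U x y - avgP P U x y)|) ^ 2 ≤ blockEnergy U (partInf P R) - blockEnergy U P :=
  calc _ ≤ (∑ z, ∑ z', volume.real (partInf P R z) * volume.real (partInf P R z') *
          |blockAvg U (partInf P R) z z' - blockAvg U P z.1 z'.1|) ^ 2 :=
        pow_le_pow_left₀ (Finset.sum_nonneg fun _ _ => Finset.sum_nonneg fun _ _ => abs_nonneg _)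
          (hU.sum_abs_integral_integral_sub_avgP_le hP hR hs hs') 2
    _ ≤ _ := (hP.inf hR).sq_sum_sum_mul_abs_le _
    _ = _ := (hU.blockEnergy_inf_sub hP hR).symm

end Energy

section CutRefinement

variable {ι κ : Type*} [Fintype ι] [Fintype κ] {P : ι → Set ℝ} {Q S T : κ → Set ℝ}
  {U : ℝ → ℝ → ℝ}

lemma IsPartition.eq_biUnion_filter {σ : Type*} [Fintype σ] [DecidableEq κ] {R : σ → Set ℝ}
    (hR : IsPartition R) (hQ : IsPartition Q) (hSQ : ∀ i, S i ⊆ Q i) (q : σ → κ) (b : σ → Bool)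
    (hRsub : ∀ z, R z ⊆ Q (q z) ∩ bipartition (⋃ i, S i) (b z)) (i : κ) :
    S i = ⋃ z ∈ Finset.univ.filter (fun z => q z = i ∧ b z = true), R z := by
  refine hR.eq_biUnion ((hSQ i).trans (hQ.2.1 i)) _ (fun z hz x hx => ?_) fun z hz => ?_
  · obtain ⟨hq, hb⟩ := (Finset.mem_filter.1 hz).2
    obtain ⟨hxQ, hxS⟩ := hRsub z hx
    rw [hq] at hxQ
    rw [hb] at hxS
    obtain ⟨i', hi'⟩ := mem_iUnion.1 hxS
    rwa [hQ.eq_of_mem (hSQ i' hi') hxQ] at hi'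
  · refine Set.disjoint_left.2 fun x hxz hxS => ?_
    obtain ⟨hxQ, hxb⟩ := hRsub z hxz
    have hq : q z = i := hQ.eq_of_mem hxQ (hSQ i hxS)
    have hb : b z = false := by simpa [hq] using hz
    rw [hb] at hxb
    exact hxb.2 (mem_iUnion.2 ⟨i, hxS⟩)

/-- The common refinement of `Q` and the sets `⋃ S i`, `⋃ T j`: a cell is indexed by its
`Q`-class and by whether it lies in `⋃ S i` and in `⋃ T j`. -/
def cutPartition (Q S T : κ → Set ℝ) : (κ × Bool) × Bool → Set ℝ :=
  partInf (partInf Q (bipartition (⋃ i, S i))) (bipartition (⋃ j, T j))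

lemma isPartition_cutPartition (hQ : IsPartition Q)
    (hST : ∀ i, MeasurableSet (S i) ∧ MeasurableSet (T i) ∧ S i ⊆ Q i ∧ T i ⊆ Q i) :
    IsPartition (cutPartition Q S T) :=
  (hQ.inf (isPartition_bipartition (MeasurableSet.iUnion fun i => (hST i).1)
    (iUnion_subset fun i => (hST i).2.2.1.trans (hQ.2.1 i)))).inf
    (isPartition_bipartition (MeasurableSet.iUnion fun i => (hST i).2.1)
      (iUnion_subset fun i => (hST i).2.2.2.trans (hQ.2.1 i)))

lemma IsKernel.sq_sum_abs_integral_integral_sub_avgP_le_cutPartition (hU : IsKernel U)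
    (hP : IsPartition P) (hQ : IsPartition Q)
    (hST : ∀ i, MeasurableSet (S i) ∧ MeasurableSet (T i) ∧ S i ⊆ Q i ∧ T i ⊆ Q i) :
    (∑ i, ∑ j, |∫ x in S i, ∫ y in T j, (U x y - avgP P U x y)|) ^ 2 ≤
      blockEnergy U (partInf P (cutPartition Q S T)) - blockEnergy U P := by
  classical
  have hR := isPartition_cutPartition hQ hST
  have hS (i : κ) := (hP.inf hR).eq_biUnion_filter hQ (fun i => (hST i).2.2.1)
    (fun z => z.2.1.1) (fun z => z.2.1.2) (fun z x hx => ⟨hx.2.1.1, hx.2.1.2⟩) i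
  have hT (j : κ) := (hP.inf hR).eq_biUnion_filter hQ (fun i => (hST i).2.2.2)
    (fun z => z.2.1.1) (fun z => z.2.2) (fun z x hx => ⟨hx.2.1.1, hx.2.2⟩) j
  have hdisj (p : ι × ((κ × Bool) × Bool) → Prop) [DecidablePred p] :
      Pairwise fun i j => Disjoint (Finset.univ.filter fun z => z.2.1.1 = i ∧ p z)
        (Finset.univ.filter fun z => z.2.1.1 = j ∧ p z) :=
    fun i j hij => Finset.disjoint_filter.2 fun z _ hi hj => hij (hi.1.symm.trans hj.1)
  have key := hU.sq_sum_abs_integral_integral_sub_avgP_le hP hR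
    (hdisj fun z => z.2.1.2 = true) (hdisj fun z => z.2.2 = true)
  simp only [← hS, ← hT] at key
  exact key

end CutRefinement

lemma Finset.sum_sum_sum_sum_comm {α β γ δ : Type*} [Fintype α] [Fintype β] [Fintype γ]
    [Fintype δ] (f : α → β → γ → δ → ℝ) :
    ∑ a, ∑ b, ∑ c, ∑ d, f a b c d = ∑ c, ∑ d, ∑ a, ∑ b, f a b c d := by
  rw [← Fintype.sum_prod_type' (f := fun a b => ∑ c, ∑ d, f a b c d), Finset.sum_comm]
  refine Finset.sum_congr rfl fun c _ => ?_
  rw [Finset.sum_comm]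
  exact Finset.sum_congr rfl fun d _ => Fintype.sum_prod_type' (f := fun a b => f a b c d)

section ColoredEnergy

variable {k : ℕ} {W : Fin k → Fin k → ℝ → ℝ → ℝ} {ι κ : Type*} [Fintype ι] [Fintype κ]
  {P : ι → Set ℝ}

def coloredEnergy (W : Fin k → Fin k → ℝ → ℝ → ℝ) (P : ι → Set ℝ) : ℝ :=
  ∑ α, ∑ β, blockEnergy (W α β) P

lemma IsColoredDigraphon.isKernel (hW : IsColoredDigraphon k W) (α β : Fin k) :
    IsKernel (W α β) :=
  ⟨hW.1 α β, 1, fun x y => abs_le.2 ⟨by linarith [(hW.2.1 α β x y).1], (hW.2.1 α β x y).2⟩⟩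

lemma coloredEnergy_nonneg (W : Fin k → Fin k → ℝ → ℝ → ℝ) (P : ι → Set ℝ) :
    0 ≤ coloredEnergy W P :=
  Finset.sum_nonneg fun _ _ => Finset.sum_nonneg fun _ _ => Finset.sum_nonneg fun _ _ =>
    Finset.sum_nonneg fun _ _ =>
      mul_nonneg (mul_nonneg measureReal_nonneg measureReal_nonneg) (sq_nonneg _)

lemma coloredEnergy_comp_equiv (W : Fin k → Fin k → ℝ → ℝ → ℝ) (P : ι → Set ℝ) (e : κ ≃ ι) :
    coloredEnergy W (P ∘ e) = coloredEnergy W P :=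
  Finset.sum_congr rfl fun _ _ => Finset.sum_congr rfl fun _ _ =>
    Fintype.sum_equiv e _ _ fun _ => Fintype.sum_equiv e _ _ fun _ => rfl

lemma IsColoredDigraphon.sum_integral_integral (hW : IsColoredDigraphon k W) {A B : Set ℝ}
    (hA : volume A ≠ ⊤) (hB : volume B ≠ ⊤) :
    ∑ α, ∑ β, ∫ x in A, ∫ y in B, W α β x y = volume.real A * volume.real B := by
  have h := integral_integral_finsetSum (U := fun p : Fin k × Fin k => W p.1 p.2) Finset.univ
    (fun p _ => hW.isKernel p.1 p.2) hA hB
  simp only [Fintype.sum_prod_type, hW.2.2.2] at h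
  simp [← h, mul_comm]

lemma IsColoredDigraphon.sum_blockAvg_le_one (hW : IsColoredDigraphon k W) (hP : IsPartition P)
    (i j : ι) : ∑ α, ∑ β, blockAvg (W α β) P i j ≤ 1 := by
  simp only [blockAvg, ← Finset.sum_div,
    hW.sum_integral_integral (hP.volume_ne_top i) (hP.volume_ne_top j), div_div]
  exact div_self_le_one _

lemma IsColoredDigraphon.sum_sq_blockAvg_le_one (hW : IsColoredDigraphon k W)
    (hP : IsPartition P) (i j : ι) : ∑ α, ∑ β, blockAvg (W α β) P i j ^ 2 ≤ 1 := by
  have h0 (α β : Fin k) : 0 ≤ blockAvg (W α β) P i j :=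
    blockAvg_nonneg (fun x y => (hW.2.1 α β x y).1) P i j
  have h1 (α β : Fin k) : blockAvg (W α β) P i j ≤ 1 :=
    ((Finset.single_le_sum (fun β' _ => h0 α β') (Finset.mem_univ β)).trans
      (Finset.single_le_sum (fun α' _ => Finset.sum_nonneg fun β' _ => h0 α' β')
        (Finset.mem_univ α))).trans (hW.sum_blockAvg_le_one hP i j)
  calc _ ≤ ∑ α, ∑ β, blockAvg (W α β) P i j := by
        gcongr with α _ β _
        exact pow_le_of_le_one (h0 α β) (h1 α β) two_ne_zero
    _ ≤ 1 := hW.sum_blockAvg_le_one hP i j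

lemma IsColoredDigraphon.coloredEnergy_le_one (hW : IsColoredDigraphon k W)
    (hP : IsPartition P) : coloredEnergy W P ≤ 1 := by
  have hswap : coloredEnergy W P = ∑ i, ∑ j, volume.real (P i) * volume.real (P j) *
      ∑ α, ∑ β, blockAvg (W α β) P i j ^ 2 := by
    simp only [coloredEnergy, blockEnergy, Finset.mul_sum]
    exact Finset.sum_sum_sum_sum_comm _
  calc coloredEnergy W P ≤ ∑ i, ∑ j, volume.real (P i) * volume.real (P j) := by
        rw [hswap]
        refine Finset.sum_le_sum fun i _ => Finset.sum_le_sum fun j _ => ?_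
        exact mul_le_of_le_one_right (mul_nonneg measureReal_nonneg measureReal_nonneg)
          (hW.sum_sq_blockAvg_le_one hP i j)
    _ = 1 := by rw [← Finset.sum_mul_sum, hP.sum_volume_real, one_mul]

lemma IsColoredDigraphon.blockEnergy_inf_sub_le {R : κ → Set ℝ} (hW : IsColoredDigraphon k W)
    (hP : IsPartition P) (hR : IsPartition R) (α β : Fin k) :
    blockEnergy (W α β) (partInf P R) - blockEnergy (W α β) P ≤
      coloredEnergy W (partInf P R) - coloredEnergy W P := by
  have h (α β : Fin k) : 0 ≤ blockEnergy (W α β) (partInf P R) - blockEnergy (W α β) P :=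
    sub_nonneg.2 ((hW.isKernel α β).blockEnergy_le_inf hP hR)
  calc _ ≤ ∑ β', (blockEnergy (W α β') (partInf P R) - blockEnergy (W α β') P) :=
        Finset.single_le_sum (fun β' _ => h α β') (Finset.mem_univ β)
    _ ≤ ∑ α', ∑ β', (blockEnergy (W α' β') (partInf P R) - blockEnergy (W α' β') P) :=
        Finset.single_le_sum (f := fun α' => ∑ β', _)
          (fun α' _ => Finset.sum_nonneg fun β' _ => h α' β') (Finset.mem_univ α)
    _ = _ := by simp only [coloredEnergy, Finset.sum_sub_distrib]

lemma IsColoredDigraphon.cutPNorm_sub_avgP_le {Q : κ → Set ℝ} (hW : IsColoredDigraphon k W)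
    (hP : IsPartition P) (hQ : IsPartition Q) {δ : ℝ} (hδ : 0 ≤ δ)
    (hgap : ∀ S T : κ → Set ℝ,
      (∀ i, MeasurableSet (S i) ∧ MeasurableSet (T i) ∧ S i ⊆ Q i ∧ T i ⊆ Q i) →
        coloredEnergy W (partInf P (cutPartition Q S T)) ≤ coloredEnergy W P + δ ^ 2)
    (α β : Fin k) :
    cutPNorm Q (fun x y => W α β x y - avgP P (W α β) x y) ≤ δ := by
  refine Real.sSup_le ?_ hδ
  rintro r ⟨S, T, hST, rfl⟩
  have hinc := (hW.isKernel α β).sq_sum_abs_integral_integral_sub_avgP_le_cutPartition hP hQ hST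
  have hcol := hW.blockEnergy_inf_sub_le hP (isPartition_cutPartition hQ hST) α β
  beta_reduce
  refine (pow_le_pow_iff_left₀ (Finset.sum_nonneg fun _ _ => Finset.sum_nonneg fun _ _ =>
    abs_nonneg _) hδ two_ne_zero).1 ?_
  linarith [hgap S T hST]

end ColoredEnergy

/-- A partition into `t ≤ partBound m₀ n` parts, refined by a partition into at most
`max t m₀ ≤ t * m₀` classes and by two sets, has at most `partBound m₀ (n + 1)` parts. -/
def partBound (m₀ : ℕ) : ℕ → ℕ
  | 0 => 1
  | n + 1 => 4 * m₀ * partBound m₀ n ^ 2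

lemma four_mul_mul_partBound (m₀ n : ℕ) : 4 * m₀ * partBound m₀ n = (4 * m₀) ^ 2 ^ n := by
  induction n with
  | zero => simp [partBound]
  | succ n ih => rw [partBound, pow_succ 2 n, pow_mul, ← ih]; ring

lemma one_le_partBound {m₀ : ℕ} (hm : 1 ≤ m₀) (n : ℕ) : 1 ≤ partBound m₀ n := by
  induction n with
  | zero => exact le_rfl
  | succ n ih =>
    calc 1 = 1 * 1 * 1 ^ 2 := rfl
      _ ≤ 4 * m₀ * partBound m₀ n ^ 2 := by gcongr; omega

lemma partBound_le_rpow {m₀ n : ℕ} (hm : 1 ≤ m₀) {s : ℝ} (hn : (n : ℝ) ≤ s) :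
    (partBound m₀ n : ℝ) ≤ (16 * m₀ : ℝ) ^ ((2 : ℝ) ^ s) / 4 := by
  have hm' : (1 : ℝ) ≤ m₀ := by exact_mod_cast hm
  have h1 : 4 * partBound m₀ n ≤ (4 * m₀) ^ 2 ^ n := by
    rw [← four_mul_mul_partBound]
    exact Nat.mul_le_mul_right _ (by omega)
  have h2 : ((2 ^ n : ℕ) : ℝ) ≤ (2 : ℝ) ^ s := by
    rw [Nat.cast_pow, Nat.cast_ofNat, ← Real.rpow_natCast]
    exact Real.rpow_le_rpow_of_exponent_le one_le_two hn
  have h3 : (4 * m₀ : ℝ) ^ 2 ^ n ≤ (16 * m₀ : ℝ) ^ ((2 : ℝ) ^ s) :=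
    calc (4 * m₀ : ℝ) ^ 2 ^ n ≤ (16 * m₀ : ℝ) ^ 2 ^ n :=
          pow_le_pow_left₀ (by positivity) (by linarith) _
      _ = (16 * m₀ : ℝ) ^ ((2 ^ n : ℕ) : ℝ) := (Real.rpow_natCast _ _).symm
      _ ≤ _ := Real.rpow_le_rpow_of_exponent_le (by linarith) h2
  have h1' : (4 * partBound m₀ n : ℝ) ≤ (4 * m₀ : ℝ) ^ 2 ^ n := by exact_mod_cast h1
  linarith

lemma mul_mul_four_le_partBound_succ {m₀ n t t' : ℕ} (hm : 1 ≤ m₀) (ht : 1 ≤ t)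
    (htn : t ≤ partBound m₀ n) (ht' : t' ≤ max t m₀) : t * (t' * 2 * 2) ≤ partBound m₀ (n + 1) := by
  have ht'' : t' ≤ t * m₀ :=
    ht'.trans (max_le (Nat.le_mul_of_pos_right t hm) (Nat.le_mul_of_pos_left m₀ ht))
  calc t * (t' * 2 * 2) ≤ t * (t * m₀ * 2 * 2) := by gcongr
    _ = 4 * m₀ * t ^ 2 := by ring
    _ ≤ 4 * m₀ * partBound m₀ n ^ 2 := by gcongr

lemma exists_le_add_div_of_sub_le (f : ℕ → ℝ) (N : ℕ) {c : ℝ} (h : f (N + 1) - f 0 ≤ c) :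
    ∃ n ≤ N, f (n + 1) ≤ f n + c / (N + 1) := by
  by_contra! H
  have hlt : ∑ n ∈ Finset.range (N + 1), c / (N + 1) <
      ∑ n ∈ Finset.range (N + 1), (f (n + 1) - f n) :=
    Finset.sum_lt_sum_of_nonempty Finset.nonempty_range_add_one fun n hn => by
      linarith [H n (Nat.lt_succ_iff.1 (Finset.mem_range.1 hn))]
  rw [Finset.sum_range_sub, Finset.sum_const, Finset.card_range, nsmul_eq_mul] at hlt
  have hc : ((N + 1 : ℕ) : ℝ) * (c / (N + 1)) = c := by push_cast; field_simp
  linarith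

section SupEnergy

variable {k : ℕ} {W : Fin k → Fin k → ℝ → ℝ → ℝ}

lemma isPartition_const : IsPartition (fun _ : Fin 1 => I01) :=
  ⟨fun _ => measurableSet_Icc, fun _ => subset_rfl,
    fun i j h => absurd (Subsingleton.elim i j) h, iUnion_const _⟩

def supColoredEnergy (W : Fin k → Fin k → ℝ → ℝ → ℝ) (m : ℕ) : ℝ :=
  sSup {e | ∃ t ≤ m, ∃ P : Fin t → Set ℝ, IsPartition P ∧ coloredEnergy W P = e}

lemma supColoredEnergy_nonneg (W : Fin k → Fin k → ℝ → ℝ → ℝ) (m : ℕ) :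
    0 ≤ supColoredEnergy W m :=
  Real.sSup_nonneg (by rintro _ ⟨t, -, P, -, rfl⟩; exact coloredEnergy_nonneg W P)

lemma IsColoredDigraphon.supColoredEnergy_le_one (hW : IsColoredDigraphon k W) (m : ℕ) :
    supColoredEnergy W m ≤ 1 :=
  Real.sSup_le (by rintro _ ⟨t, -, P, hP, rfl⟩; exact hW.coloredEnergy_le_one hP) zero_le_one

lemma IsColoredDigraphon.coloredEnergy_le_supColoredEnergy (hW : IsColoredDigraphon k W)
    {κ : Type*} [Fintype κ] {R : κ → Set ℝ} (hR : IsPartition R) {m : ℕ}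
    (hcard : Fintype.card κ ≤ m) : coloredEnergy W R ≤ supColoredEnergy W m :=
  le_csSup ⟨1, by rintro _ ⟨t, -, P, hP, rfl⟩; exact hW.coloredEnergy_le_one hP⟩
    ⟨_, hcard, R ∘ (Fintype.equivFin κ).symm, hR.comp_equiv _, coloredEnergy_comp_equiv _ _ _⟩

lemma exists_supColoredEnergy_sub_lt (W : Fin k → Fin k → ℝ → ℝ → ℝ) {m : ℕ} (hm : 1 ≤ m)
    {δ : ℝ} (hδ : 0 < δ) :
    ∃ t ≤ m, ∃ P : Fin t → Set ℝ, IsPartition P ∧ supColoredEnergy W m - δ < coloredEnergy W P := by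
  have hne : {e | ∃ t ≤ m, ∃ P : Fin t → Set ℝ, IsPartition P ∧ coloredEnergy W P = e}.Nonempty :=
    ⟨_, 1, hm, _, isPartition_const, rfl⟩
  obtain ⟨_, ⟨t, ht, P, hP, rfl⟩, hlt⟩ :=
    exists_lt_of_lt_csSup hne (sub_lt_self (supColoredEnergy W m) hδ)
  exact ⟨t, ht, P, hP, hlt⟩

/-- Pigeonhole on the maximal energies `supColoredEnergy W (partBound m₀ n)`, which lie in
`[0, 1]`: some step `n → n + 1` gains at most `1 / (N + 1)`. -/
lemma IsColoredDigraphon.exists_partition_coloredEnergy_gap (hW : IsColoredDigraphon k W)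
    {m₀ : ℕ} (hm : 1 ≤ m₀) (N : ℕ) {δ : ℝ} (hδ : 1 / ((N : ℝ) + 1) < δ) :
    ∃ n ≤ N, ∃ t, ∃ P : Fin t → Set ℝ, IsPartition P ∧ t ≤ partBound m₀ n ∧
      ∀ (κ : Type) [Fintype κ] (R : κ → Set ℝ), IsPartition R →
        Fintype.card κ ≤ partBound m₀ (n + 1) → coloredEnergy W R < coloredEnergy W P + δ := by
  obtain ⟨n, hnN, hn⟩ := exists_le_add_div_of_sub_le
    (fun n => supColoredEnergy W (partBound m₀ n)) N (c := 1)
    (by linarith [hW.supColoredEnergy_le_one (partBound m₀ (N + 1)),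
      supColoredEnergy_nonneg W (partBound m₀ 0)])
  obtain ⟨t, ht, P, hP, hPe⟩ :=
    exists_supColoredEnergy_sub_lt W (one_le_partBound hm n) (sub_pos.2 hδ)
  refine ⟨n, hnN, t, P, hP, ht, fun κ _ R hR hcard => ?_⟩
  linarith [hW.coloredEnergy_le_supColoredEnergy hR hcard]

end SupEnergy

theorem intermediate_regularity {k : ℕ} (ε : ℝ) (hε : 0 < ε) (m₀ : ℕ) (hm : 1 ≤ m₀)
    (hk : 1 ≤ k) (W : Fin k → Fin k → ℝ → ℝ → ℝ) (hW : IsColoredDigraphon k W) :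
    ∃ (t : ℕ) (P : Fin t → Set ℝ), IsPartition P ∧
      (t : ℝ) ≤ (16 * m₀ : ℝ) ^ ((2:ℝ) ^ ((k:ℝ) ^ 4 / ε ^ 2)) / 4 ∧
      ∀ (t' : ℕ), t' ≤ max t m₀ → ∀ Q : Fin t' → Set ℝ, IsPartition Q →
        ∑ α, ∑ β, cutPNorm Q (fun x y => W α β x y - avgP P (W α β) x y) ≤ ε := by
  have hk0 : (0 : ℝ) < k := by exact_mod_cast hk
  set s : ℝ := (k : ℝ) ^ 4 / ε ^ 2
  have hN : 1 / ((⌊s⌋₊ : ℝ) + 1) < (ε / k ^ 2) ^ 2 := by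
    rw [div_pow, ← pow_mul, one_div_lt (by positivity) (by positivity), one_div_div]
    exact Nat.lt_floor_add_one s
  obtain ⟨n, hnN, t, P, hP, htn, hgap⟩ := hW.exists_partition_coloredEnergy_gap hm ⌊s⌋₊ hN
  refine ⟨t, P, hP, (Nat.cast_le.2 htn).trans (partBound_le_rpow hm
    ((Nat.cast_le.2 hnN).trans (Nat.floor_le (by positivity)))), fun t' ht' Q hQ => ?_⟩
  have ht : 1 ≤ t := Fin.pos_iff_nonempty.2 hP.nonempty
  calc _ ≤ ∑ _α : Fin k, ∑ _β : Fin k, ε / k ^ 2 :=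
        Finset.sum_le_sum fun α _ => Finset.sum_le_sum fun β _ =>
          hW.cutPNorm_sub_avgP_le hP hQ (by positivity) (fun S T hST =>
            (hgap _ _ (hP.inf (isPartition_cutPartition hQ hST))
              (by simpa using mul_mul_four_le_partBound_succ hm ht htn ht')).le) α β
    _ = ε := by
        simp only [Finset.sum_const, Finset.card_univ, Fintype.card_fin, nsmul_eq_mul]
        field_simp
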